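/- Let 𝔤 be a differential graded Lie algebra over a field k of characteristic zero. The category of representations of 𝔤 admits a model structure in which weak equivalences are the quasi-isomorphisms (maps inducing isomorphisms on all cohomology groups) and fibrations are the degreewise surjective maps; in particular every object is fibrant. -/

import Mathlib

open TensorProduct

universe u

/-- Transport along an equality of degrees. -/
def gcast {C : ℤ → Type u} {i j : ℤ} (h : i = j) (x : C i) : C j := h ▸ x

/-- Transport along an equality of degrees, as a linear map. -/
def lgcast {K : Type u} [Field K] {C : ℤ → Type u} [∀ i, AddCommGroup (C i)]
    [∀ i, Module K (C i)] {i j : ℤ} (h : i = j) : C i →ₗ[K] C j :=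
  h ▸ LinearMap.id

/-- A differential graded Lie algebra over `K`, given by its graded pieces. -/
class DGLA (K : Type u) [Field K] (A : ℤ → Type u)
    [∀ i, AddCommGroup (A i)] [∀ i, Module K (A i)] where
  d : ∀ i, A i →ₗ[K] A (i + 1)
  bk : ∀ i j, A i →ₗ[K] A j →ₗ[K] A (i + j)
  d_sq : ∀ i (x : A i), d (i + 1) (d i x) = 0
  antisymm : ∀ i j (x : A i) (y : A j),
    bk j i y x = gcast (add_comm i j) (-(((-1 : K) ^ (i * j)) • bk i j x y))
  jacobi : ∀ p q r (x : A p) (y : A q) (z : A r),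
    bk p (q + r) x (bk q r y z)
      = gcast (show p + q + r = p + (q + r) by ring) (bk (p + q) r (bk p q x y) z)
        + ((-1 : K) ^ (p * q)) •
          gcast (show q + (p + r) = p + (q + r) by ring) (bk q (p + r) y (bk p r x z))
  leibniz : ∀ i j (x : A i) (y : A j),
    d (i + j) (bk i j x y)
      = gcast (show i + 1 + j = i + j + 1 by ring) (bk (i + 1) j (d i x) y)
        + ((-1 : K) ^ i) •
          gcast (show i + (j + 1) = i + j + 1 by ring) (bk i (j + 1) x (d j y))

/-- A representation of a differential graded Lie algebra, following Budur–Wang's sign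
convention `[x,y]v = x(yv) + (-1)^{pq} y(xv)`. -/
class DGLARep (K : Type u) [Field K] (A : ℤ → Type u)
    [∀ i, AddCommGroup (A i)] [∀ i, Module K (A i)] [DGLA K A]
    (V : ℤ → Type u) [∀ i, AddCommGroup (V i)] [∀ i, Module K (V i)] where
  dV : ∀ i, V i →ₗ[K] V (i + 1)
  ρ : ∀ p j, A p →ₗ[K] V j →ₗ[K] V (p + j)
  dV_sq : ∀ i (v : V i), dV (i + 1) (dV i v) = 0
  leibniz : ∀ p j (x : A p) (v : V j),
    dV (p + j) (ρ p j x v)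
      = gcast (show p + 1 + j = p + j + 1 by ring) (ρ (p + 1) j (DGLA.d (K := K) (A := A) p x) v)
        + ((-1 : K) ^ p) •
          gcast (show p + (j + 1) = p + j + 1 by ring) (ρ p (j + 1) x (dV j v))
  compat : ∀ p q j (x : A p) (y : A q) (v : V j),
    ρ (p + q) j (DGLA.bk (K := K) (A := A) p q x y) v
      = gcast (show p + (q + j) = p + q + j by ring) (ρ p (q + j) x (ρ q j y v))
        + ((-1 : K) ^ (p * q)) •
          gcast (show q + (p + j) = p + q + j by ring) (ρ q (p + j) y (ρ p j x v))

section RepCategory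

open CategoryTheory

variable (K : Type) [Field K] (A : ℤ → Type)
  [∀ i, AddCommGroup (A i)] [∀ i, Module K (A i)] [DGLA K A]

/-- An object of the category of representations of the dgla `𝔤`. -/
structure RepObj where
  V : ℤ → ModuleCat.{0} K
  dV : ∀ i, V i →ₗ[K] V (i + 1)
  ρ : ∀ p j, A p →ₗ[K] (V j →ₗ[K] V (p + j))
  dV_sq : ∀ i (v : V i), dV (i + 1) (dV i v) = 0
  leibniz : ∀ p j (x : A p) (v : V j),
    dV (p + j) (ρ p j x v)
      = gcast (C := fun i => V i) (show p + 1 + j = p + j + 1 by ring)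
          (ρ (p + 1) j (DGLA.d (K := K) (A := A) p x) v)
        + ((-1 : K) ^ p) •
          gcast (C := fun i => V i) (show p + (j + 1) = p + j + 1 by ring)
            (ρ p (j + 1) x (dV j v))
  compat : ∀ p q j (x : A p) (y : A q) (v : V j),
    ρ (p + q) j (DGLA.bk (K := K) (A := A) p q x y) v
      = gcast (C := fun i => V i) (show p + (q + j) = p + q + j by ring)
          (ρ p (q + j) x (ρ q j y v))
        + ((-1 : K) ^ (p * q)) •
          gcast (C := fun i => V i) (show q + (p + j) = p + q + j by ring)
            (ρ q (p + j) y (ρ p j x v))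

variable {K A}

/-- A morphism of representations of the dgla `𝔤`. -/
@[ext] structure RepHom (X Y : RepObj K A) where
  f : ∀ i, X.V i →ₗ[K] Y.V i
  comm_d : ∀ i (v : X.V i), f (i + 1) (X.dV i v) = Y.dV i (f i v)
  comm_ρ : ∀ p j (a : A p) (v : X.V j), f (p + j) (X.ρ p j a v) = Y.ρ p j a (f j v)

instance : Category (RepObj K A) where
  Hom X Y := RepHom X Y
  id X := ⟨fun i => LinearMap.id, fun _ _ => rfl, fun _ _ _ _ => rfl⟩
  comp φ ψ := ⟨fun i => (ψ.f i).comp (φ.f i),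
    by intro i v; simp [φ.comm_d, ψ.comm_d],
    by intro p j a v; simp [φ.comm_ρ, ψ.comm_ρ]⟩
  id_comp := by intros; rfl
  comp_id := by intros; rfl
  assoc := by intros; rfl

/-- A morphism of representations is a quasi-isomorphism if it induces a bijection on all
cohomology groups. -/
def RepHom.IsQis {X Y : RepObj K A} (φ : X ⟶ Y) : Prop :=
  (∀ (i : ℤ) (y : Y.V i), Y.dV i y = 0 →
    ∃ (x : X.V i) (z : Y.V (i - 1)), X.dV i x = 0 ∧
      φ.f i x = y + gcast (C := fun j => Y.V j) (show i - 1 + 1 = i by omega)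
        (Y.dV (i - 1) z)) ∧
  (∀ (i : ℤ) (x : X.V i), X.dV i x = 0 →
    (∃ z : Y.V (i - 1), φ.f i x
        = gcast (C := fun j => Y.V j) (show i - 1 + 1 = i by omega) (Y.dV (i - 1) z)) →
    ∃ w : X.V (i - 1),
      x = gcast (C := fun j => X.V j) (show i - 1 + 1 = i by omega) (X.dV (i - 1) w))

/-- A morphism of representations is a fibration if it is degreewise surjective. -/
def RepHom.IsSurj {X Y : RepObj K A} (φ : X ⟶ Y) : Prop :=
  ∀ i, Function.Surjective (φ.f i)

/-- `f` is a retract of `g`. -/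
def IsRetract {C : Type*} [Category C] {X Y X' Y' : C} (f : X ⟶ Y) (g : X' ⟶ Y') : Prop :=
  ∃ (iX : X ⟶ X') (rX : X' ⟶ X) (iY : Y ⟶ Y') (rY : Y' ⟶ Y),
    iX ≫ rX = 𝟙 X ∧ iY ≫ rY = 𝟙 Y ∧ iX ≫ g = f ≫ iY ∧ rX ≫ f = g ≫ rY

/-- A (Quillen) model structure on a category: three classes of maps (weak equivalences,
fibrations, cofibrations) satisfying two-out-of-three, closure under retracts, the lifting
axioms, and the factorization axioms. -/
structure ModelStructure (C : Type*) [Category C] where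
  W : ∀ ⦃X Y : C⦄, (X ⟶ Y) → Prop
  Fib : ∀ ⦃X Y : C⦄, (X ⟶ Y) → Prop
  Cof : ∀ ⦃X Y : C⦄, (X ⟶ Y) → Prop
  w_comp : ∀ {X Y Z : C} (f : X ⟶ Y) (g : Y ⟶ Z), W f → W g → W (f ≫ g)
  w_cancel_left : ∀ {X Y Z : C} (f : X ⟶ Y) (g : Y ⟶ Z), W (f ≫ g) → W f → W g
  w_cancel_right : ∀ {X Y Z : C} (f : X ⟶ Y) (g : Y ⟶ Z), W (f ≫ g) → W g → W f
  w_retract : ∀ {X Y X' Y' : C} (f : X ⟶ Y) (g : X' ⟶ Y'), IsRetract f g → W g → W f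
  fib_retract : ∀ {X Y X' Y' : C} (f : X ⟶ Y) (g : X' ⟶ Y'), IsRetract f g → Fib g → Fib f
  cof_retract : ∀ {X Y X' Y' : C} (f : X ⟶ Y) (g : X' ⟶ Y'), IsRetract f g → Cof g → Cof f
  lift : ∀ {P Q X Y : C} (i : P ⟶ Q) (p : X ⟶ Y), Cof i → Fib p → (W i ∨ W p) →
    ∀ (u : P ⟶ X) (v : Q ⟶ Y), u ≫ p = i ≫ v →
      ∃ h : Q ⟶ X, i ≫ h = u ∧ h ≫ p = v
  factor_cof_triv_fib : ∀ {X Y : C} (f : X ⟶ Y),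
    ∃ (Z : C) (i : X ⟶ Z) (p : Z ⟶ Y), Cof i ∧ Fib p ∧ W p ∧ i ≫ p = f
  factor_triv_cof_fib : ∀ {X Y : C} (f : X ⟶ Y),
    ∃ (Z : C) (i : X ⟶ Z) (p : Z ⟶ Y), Cof i ∧ W i ∧ Fib p ∧ i ≫ p = f

variable (K A)

/-- The zero representation. -/
noncomputable def zeroRep : RepObj K A where
  V := fun _ => ModuleCat.of K PUnit
  dV := fun _ => 0
  ρ := fun _ _ => 0
  dV_sq := by intros; rfl
  leibniz := by intros; apply Subsingleton.elim
  compat := by intros; apply Subsingleton.elim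

/-!
Fibrations are the degreewise surjections and cofibrations are defined by lifting against
surjective quasi-isomorphisms, so the substance lies in the two factorizations. Both are built
from free extensions `M.attach deg dgen`: generators with prescribed differentials adjoined to
`M`, realized as formal expressions in the generators and the elements of `M` under the
differential and the action, modulo the laws of a representation.

Attaching a disk for every element of `Y` factors `f : X ⟶ Y` as a map lifting against all
surjections followed by a surjection. Such a map `i` is a quasi-isomorphism: lifting against
`X ⟶ 0` gives a retraction `r`, and lifting against the based path space shows that
`𝟙 - r ≫ i` is null-homotopic.

Attaching, countably often, cells that kill the cycles whose image in `Y` is a boundary and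
spheres that hit the cycles of `Y`, and passing to the colimit, factors `f` as a cofibration
followed by a trivial fibration: cells attached along cycles lift against trivial fibrations.
The remaining axioms are two-out-of-three and the retract argument.
-/

variable {K A}

section Transport

variable {C : ℤ → Type} {i j k : ℤ}

@[simp] lemma gcast_gcast (h : i = j) (h' : j = k) (x : C i) :
    gcast h' (gcast h x) = gcast (h.trans h') x := by
  subst h h'; rfl

lemma gcast_eq_iff (h : i = j) (x : C i) (y : C j) : gcast h x = y ↔ x = gcast h.symm y := by
  subst h; rfl

variable [∀ n, AddCommGroup (C n)]

@[simp] lemma gcast_zero (h : i = j) : gcast (C := C) h 0 = 0 := by subst h; rfl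

@[simp] lemma gcast_add (h : i = j) (x y : C i) :
    gcast (C := C) h (x + y) = gcast h x + gcast h y := by subst h; rfl

@[simp] lemma gcast_sub (h : i = j) (x y : C i) :
    gcast (C := C) h (x - y) = gcast h x - gcast h y := by subst h; rfl

@[simp] lemma gcast_neg (h : i = j) (x : C i) : gcast (C := C) h (-x) = -gcast h x := by
  subst h; rfl

variable [∀ n, Module K (C n)]

@[simp] lemma gcast_smul (h : i = j) (c : K) (x : C i) :
    gcast (C := C) h (c • x) = c • gcast h x := by subst h; rfl

@[simp] lemma lgcast_apply (h : i = j) (x : C i) : lgcast (K := K) (C := C) h x = gcast h x := by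
  subst h; rfl

end Transport

lemma neg_one_zpow_mul_self (p : ℤ) : (-1 : K) ^ p * (-1 : K) ^ p = 1 := by
  rw [← mul_zpow]; norm_num

section Lifting

variable {C : Type*} [Category C]

def HasLLP (P : ∀ ⦃E B : C⦄, (E ⟶ B) → Prop) {X Y : C} (i : X ⟶ Y) : Prop :=
  ∀ ⦃E B : C⦄ (p : E ⟶ B), P p → ∀ (u : X ⟶ E) (v : Y ⟶ B), u ≫ p = i ≫ v →
    ∃ h : Y ⟶ E, i ≫ h = u ∧ h ≫ p = v

variable {P Q : ∀ ⦃E B : C⦄, (E ⟶ B) → Prop}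

lemma HasLLP.of_isRetract {X Y X' Y' : C} {f : X ⟶ Y} {g : X' ⟶ Y'} (hfg : IsRetract f g)
    (hg : HasLLP P g) : HasLLP P f := by
  obtain ⟨iX, rX, iY, rY, hX, hY, hi, hr⟩ := hfg
  intro E B p hp u v huv
  obtain ⟨h, hgh, hhp⟩ := hg p hp (rX ≫ u) (rY ≫ v) (by
    rw [Category.assoc, huv, ← Category.assoc, hr, Category.assoc])
  refine ⟨iY ≫ h, ?_, ?_⟩
  · rw [← Category.assoc, ← hi, Category.assoc, hgh, ← Category.assoc, hX, Category.id_comp]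
  · rw [Category.assoc, hhp, ← Category.assoc, hY, Category.id_comp]

/-- The retract argument. -/
lemma HasLLP.of_factor {X Y Z : C} {i : X ⟶ Y} {j : X ⟶ Z} {q : Z ⟶ Y} (hi : HasLLP P i)
    (hj : HasLLP Q j) (hq : P q) (hjq : j ≫ q = i) : HasLLP Q i := by
  obtain ⟨s, his, hsq⟩ := hi q hq j (𝟙 Y) (by rw [Category.comp_id, hjq])
  intro E B p hp u v huv
  obtain ⟨h, hjh, hhp⟩ := hj p hp u (q ≫ v) (by rw [huv, ← hjq, Category.assoc])
  refine ⟨s ≫ h, ?_, ?_⟩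
  · rw [← Category.assoc, his, hjh]
  · rw [Category.assoc, hhp, ← Category.assoc, hsq, Category.id_comp]

end Lifting

namespace RepObj

variable (X : RepObj K A)

lemma dV_gcast {i j : ℤ} (h : i = j) (v : X.V i) :
    X.dV j (gcast (C := fun n => X.V n) h v)
      = gcast (C := fun n => X.V n) (by rw [h]) (X.dV i v) := by
  subst h; rfl

lemma ρ_gcast (p : ℤ) (a : A p) {i j : ℤ} (h : i = j) (v : X.V i) :
    X.ρ p j a (gcast (C := fun n => X.V n) h v)
      = gcast (C := fun n => X.V n) (by rw [h]) (X.ρ p i a v) := by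
  subst h; rfl

/-- The differential into degree `i`, indexed as in `RepHom.IsQis`. -/
noncomputable def dTo (i : ℤ) : X.V (i - 1) →ₗ[K] X.V i :=
  lgcast (K := K) (C := fun n => X.V n) (show i - 1 + 1 = i by omega) ∘ₗ X.dV (i - 1)

lemma dTo_apply (i : ℤ) (z : X.V (i - 1)) :
    X.dTo i z = gcast (C := fun n => X.V n) (show i - 1 + 1 = i by omega) (X.dV (i - 1) z) :=
  lgcast_apply _ _

lemma dV_dTo (i : ℤ) (z : X.V (i - 1)) : X.dV i (X.dTo i z) = 0 := by
  rw [dTo_apply, dV_gcast, X.dV_sq, gcast_zero]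

lemma dTo_eq_zero_iff (i : ℤ) (z : X.V (i - 1)) : X.dTo i z = 0 ↔ X.dV (i - 1) z = 0 := by
  rw [dTo_apply, gcast_eq_iff, gcast_zero]

lemma dTo_dTo (i : ℤ) (z : X.V (i - 1 - 1)) : X.dTo i (X.dTo (i - 1) z) = 0 := by
  rw [X.dTo_apply i, X.dV_dTo, gcast_zero]

end RepObj

namespace RepHom

variable {X Y Z : RepObj K A}

@[simp] lemma comp_f (φ : X ⟶ Y) (ψ : Y ⟶ Z) (i : ℤ) (v : X.V i) :
    (φ ≫ ψ).f i v = ψ.f i (φ.f i v) := rfl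

@[simp] lemma id_f (i : ℤ) (v : X.V i) : (𝟙 X : X ⟶ X).f i v = v := rfl

lemma congr_f {φ ψ : X ⟶ Y} (h : φ = ψ) (i : ℤ) (v : X.V i) : φ.f i v = ψ.f i v := by
  rw [h]

lemma hom_ext {φ ψ : X ⟶ Y} (h : ∀ i v, φ.f i v = ψ.f i v) : φ = ψ :=
  RepHom.ext (funext fun i => LinearMap.ext (h i))

lemma f_gcast (φ : X ⟶ Y) {i j : ℤ} (h : i = j) (v : X.V i) :
    φ.f j (gcast (C := fun n => X.V n) h v) = gcast (C := fun n => Y.V n) h (φ.f i v) := by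
  subst h; rfl

lemma map_dTo (φ : X ⟶ Y) (i : ℤ) (z : X.V (i - 1)) :
    φ.f i (X.dTo i z) = Y.dTo i (φ.f (i - 1) z) := by
  rw [X.dTo_apply, Y.dTo_apply, f_gcast, φ.comm_d]

lemma map_cycle (φ : X ⟶ Y) {i : ℤ} {x : X.V i} (hx : X.dV i x = 0) :
    Y.dV i (φ.f i x) = 0 := by
  rw [← φ.comm_d, hx, map_zero]

instance : Zero (X ⟶ Y) := ⟨⟨fun _ => 0, fun _ _ => by simp, fun _ _ _ _ => by simp⟩⟩

instance : Sub (X ⟶ Y) :=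
  ⟨fun φ ψ => ⟨fun i => φ.f i - ψ.f i, fun i v => by simp [φ.comm_d, ψ.comm_d],
    fun p j a v => by simp [φ.comm_ρ, ψ.comm_ρ]⟩⟩

@[simp] lemma zero_f (i : ℤ) (v : X.V i) : (0 : X ⟶ Y).f i v = 0 := rfl

@[simp] lemma sub_f (φ ψ : X ⟶ Y) (i : ℤ) (v : X.V i) :
    (φ - ψ).f i v = φ.f i v - ψ.f i v :=
  rfl

lemma isQis_iff (φ : X ⟶ Y) :
    IsQis φ ↔
      (∀ i (y : Y.V i), Y.dV i y = 0 → ∃ x z, X.dV i x = 0 ∧ φ.f i x = y + Y.dTo i z) ∧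
      (∀ i (x : X.V i), X.dV i x = 0 → (∃ z, φ.f i x = Y.dTo i z) →
        ∃ w, x = X.dTo i w) := by
  simp only [IsQis, RepObj.dTo_apply]

lemma IsQis.comp {φ : X ⟶ Y} {ψ : Y ⟶ Z} (hφ : IsQis φ) (hψ : IsQis ψ) :
    IsQis (φ ≫ ψ) := by
  rw [isQis_iff] at hφ hψ ⊢
  refine ⟨fun i z hz => ?_, fun i x hx ⟨c, hc⟩ => ?_⟩
  · obtain ⟨y, c, hy, hyc⟩ := hψ.1 i z hz
    obtain ⟨x, b, hx, hxb⟩ := hφ.1 i y hy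
    refine ⟨x, c + ψ.f (i - 1) b, hx, ?_⟩
    rw [comp_f, hxb, map_add, hyc, map_dTo, map_add]
    abel
  · obtain ⟨w, hw⟩ := hψ.2 i (φ.f i x) (map_cycle φ hx) ⟨c, hc⟩
    exact hφ.2 i x hx ⟨w, hw⟩

lemma IsQis.of_comp_left {φ : X ⟶ Y} {ψ : Y ⟶ Z} (h : IsQis (φ ≫ ψ)) (hφ : IsQis φ) :
    IsQis ψ := by
  rw [isQis_iff] at h hφ ⊢
  refine ⟨fun i z hz => ?_, fun i y hy ⟨c, hc⟩ => ?_⟩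
  · obtain ⟨x, c, hx, hxc⟩ := h.1 i z hz
    exact ⟨φ.f i x, c, map_cycle φ hx, hxc⟩
  · obtain ⟨x, b, hx, hxb⟩ := hφ.1 i y hy
    obtain ⟨w, hw⟩ := h.2 i x hx ⟨c + ψ.f (i - 1) b, by
      rw [comp_f, hxb, map_add, hc, map_dTo, map_add]⟩
    refine ⟨φ.f (i - 1) w - b, ?_⟩
    rw [map_sub, ← map_dTo, ← hw, hxb]
    abel

lemma IsQis.of_comp_right {φ : X ⟶ Y} {ψ : Y ⟶ Z} (h : IsQis (φ ≫ ψ)) (hψ : IsQis ψ) :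
    IsQis φ := by
  rw [isQis_iff] at h hψ ⊢
  refine ⟨fun i y hy => ?_, fun i x hx ⟨c, hc⟩ => ?_⟩
  · obtain ⟨x, c, hx, hxc⟩ := h.1 i (ψ.f i y) (map_cycle ψ hy)
    obtain ⟨w, hw⟩ := hψ.2 i (φ.f i x - y) (by rw [map_sub, map_cycle φ hx, hy, sub_zero])
      ⟨c, by rw [map_sub, ← comp_f, hxc]; abel⟩
    exact ⟨x, w, hx, by rw [← hw]; abel⟩
  · exact h.2 i x hx ⟨ψ.f (i - 1) c, by rw [comp_f, hc, map_dTo]⟩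

lemma IsQis.of_isRetract {X' Y' : RepObj K A} {f : X ⟶ Y} {g : X' ⟶ Y'} (hfg : IsRetract f g)
    (hg : IsQis g) : IsQis f := by
  obtain ⟨iX, rX, iY, rY, hX, hY, hi, hr⟩ := hfg
  rw [isQis_iff] at hg ⊢
  refine ⟨fun i y hy => ?_, fun i x hx ⟨c, hc⟩ => ?_⟩
  · obtain ⟨x', c', hx', hxc'⟩ := hg.1 i (iY.f i y) (map_cycle iY hy)
    refine ⟨rX.f i x', rY.f (i - 1) c', map_cycle rX hx', ?_⟩
    rw [← comp_f, hr, comp_f, hxc', map_add, map_dTo, ← comp_f, hY, id_f]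
  · obtain ⟨w, hw⟩ := hg.2 i (iX.f i x) (map_cycle iX hx)
      ⟨iY.f (i - 1) c, by rw [← comp_f, hi, comp_f, hc, map_dTo]⟩
    refine ⟨rX.f (i - 1) w, ?_⟩
    rw [← map_dTo, ← hw, ← comp_f, hX, id_f]

lemma IsSurj.of_isRetract {X' Y' : RepObj K A} {f : X ⟶ Y} {g : X' ⟶ Y'} (hfg : IsRetract f g)
    (hg : IsSurj g) : IsSurj f := by
  obtain ⟨iX, rX, iY, rY, hX, hY, hi, hr⟩ := hfg
  intro i y
  obtain ⟨x', hx'⟩ := hg i (iY.f i y)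
  exact ⟨rX.f i x', by rw [← comp_f, hr, comp_f, hx', ← comp_f, hY, id_f]⟩

def IsTrivFib (p : X ⟶ Y) : Prop := IsSurj p ∧ IsQis p

section TrivFib

variable {E B : RepObj K A} {p : E ⟶ B} (hp : IsTrivFib p)
include hp

lemma IsTrivFib.exists_dTo_of_cycle_of_map_eq_zero {i : ℤ} {z : E.V i} (hz : E.dV i z = 0)
    (hpz : p.f i z = 0) : ∃ w : E.V (i - 1), p.f (i - 1) w = 0 ∧ E.dTo i w = z := by
  obtain ⟨hs, hq⟩ := hp
  rw [isQis_iff] at hq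
  obtain ⟨w₀, hw₀⟩ := hq.2 i z hz ⟨0, by rw [hpz, map_zero]⟩
  have hpw₀ : B.dV (i - 1) (p.f (i - 1) w₀) = 0 := by
    rw [← B.dTo_eq_zero_iff, ← map_dTo, ← hw₀, hpz]
  obtain ⟨e, c, he, hec⟩ := hq.1 (i - 1) (p.f (i - 1) w₀) hpw₀
  obtain ⟨c', rfl⟩ := hs (i - 1 - 1) c
  refine ⟨w₀ - e + E.dTo (i - 1) c', ?_, ?_⟩
  · rw [map_add, map_sub, hec, map_dTo]; abel
  · rw [map_add, map_sub, E.dTo_dTo, (E.dTo_eq_zero_iff i e).2 he, hw₀]; abel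

lemma IsTrivFib.exists_dV_eq {i : ℤ} {c : E.V (i + 1)} {b : B.V i} (hc : E.dV (i + 1) c = 0)
    (hcb : p.f (i + 1) c = B.dV i b) : ∃ e : E.V i, E.dV i e = c ∧ p.f i e = b := by
  obtain ⟨w₀, rfl⟩ := hp.1 i b
  obtain ⟨w, hpw, hw⟩ := hp.exists_dTo_of_cycle_of_map_eq_zero (z := c - E.dV i w₀)
    (by rw [map_sub, hc, E.dV_sq, sub_zero]) (by rw [map_sub, hcb, p.comm_d, sub_self])
  refine ⟨w₀ + gcast (C := fun n => E.V n) (show i + 1 - 1 = i by omega) w, ?_, ?_⟩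
  · rw [map_add, E.dV_gcast, ← E.dTo_apply, hw, add_sub_cancel]
  · rw [map_add, f_gcast, hpw, gcast_zero, add_zero]

end TrivFib

end RepHom

namespace RepObj

section PathSpace

variable (Q : RepObj K A)

lemma gcast_pair {i j : ℤ} (h : i = j) (v : Q.V i × Q.V (i - 1)) :
    gcast (C := fun m => Q.V m × Q.V (m - 1)) h v
      = (gcast (C := fun m => Q.V m) h v.1,
          gcast (C := fun m => Q.V m) (by rw [h]) v.2) := by
  subst h; rfl

noncomputable def pathD (n : ℤ) : Q.V n × Q.V (n - 1) →ₗ[K] Q.V (n + 1) × Q.V (n + 1 - 1) :=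
  (Q.dV n ∘ₗ LinearMap.fst K _ _).prod
    (lgcast (K := K) (C := fun m => Q.V m) (show n = n + 1 - 1 by omega) ∘ₗ LinearMap.fst K _ _
      - (lgcast (K := K) (C := fun m => Q.V m) (show n - 1 + 1 = n + 1 - 1 by omega)
          ∘ₗ Q.dV (n - 1)) ∘ₗ LinearMap.snd K _ _)

noncomputable def pathρ (p j : ℤ) :
    A p →ₗ[K] Q.V j × Q.V (j - 1) →ₗ[K] Q.V (p + j) × Q.V (p + j - 1) :=
  LinearMap.mk₂ K (fun a v => (Q.ρ p j a v.1, (-1 : K) ^ p •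
      gcast (C := fun m => Q.V m) (show p + (j - 1) = p + j - 1 by omega) (Q.ρ p (j - 1) a v.2)))
    (fun _ _ _ => by simp only [map_add, LinearMap.add_apply, gcast_add, smul_add, Prod.mk_add_mk])
    (fun _ _ _ => by
      simp only [map_smul, LinearMap.smul_apply, gcast_smul, Prod.smul_mk]
      rw [smul_comm])
    (fun _ _ _ => by
      simp only [map_add, gcast_add, smul_add, Prod.fst_add, Prod.snd_add, Prod.mk_add_mk])
    (fun _ _ _ => by
      simp only [map_smul, gcast_smul, Prod.smul_fst, Prod.smul_snd, Prod.smul_mk]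
      rw [smul_comm])

lemma pathD_apply (n : ℤ) (x : Q.V n) (y : Q.V (n - 1)) :
    Q.pathD n (x, y) = (Q.dV n x, gcast (C := fun m => Q.V m) (show n = n + 1 - 1 by omega) x
      - gcast (C := fun m => Q.V m) (show n - 1 + 1 = n + 1 - 1 by omega) (Q.dV (n - 1) y)) := by
  simp [pathD]

lemma pathρ_apply (p j : ℤ) (a : A p) (x : Q.V j) (y : Q.V (j - 1)) :
    Q.pathρ p j a (x, y) = (Q.ρ p j a x, (-1 : K) ^ p •
      gcast (C := fun m => Q.V m) (show p + (j - 1) = p + j - 1 by omega) (Q.ρ p (j - 1) a y)) :=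
  rfl

lemma pathD_pathD (n : ℤ) (v : Q.V n × Q.V (n - 1)) : Q.pathD (n + 1) (Q.pathD n v) = 0 := by
  obtain ⟨x, y⟩ := v
  simp [pathD_apply, Q.dV_gcast, Q.dV_sq]

lemma pathD_pathρ (p j : ℤ) (a : A p) (v : Q.V j × Q.V (j - 1)) :
    Q.pathD (p + j) (Q.pathρ p j a v)
      = gcast (C := fun m => Q.V m × Q.V (m - 1)) (show p + 1 + j = p + j + 1 by ring)
          (Q.pathρ (p + 1) j (DGLA.d (K := K) (A := A) p a) v)
        + ((-1 : K) ^ p) • gcast (C := fun m => Q.V m × Q.V (m - 1))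
          (show p + (j + 1) = p + j + 1 by ring) (Q.pathρ p (j + 1) a (Q.pathD j v)) := by
  obtain ⟨x, y⟩ := v
  simp only [pathD_apply, pathρ_apply, gcast_pair, Prod.smul_mk, Prod.mk_add_mk, Prod.mk.injEq]
  refine ⟨Q.leibniz p j a x, ?_⟩
  simp only [map_smul, map_sub, Q.dV_gcast, Q.ρ_gcast, Q.leibniz, gcast_add, gcast_sub,
    gcast_smul, gcast_gcast, zpow_add₀ (neg_ne_zero.2 (one_ne_zero (α := K))), zpow_one,
    mul_neg_one, smul_add, smul_sub, smul_smul, neg_one_zpow_mul_self, one_smul, neg_smul,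
    gcast_neg]
  abel

lemma pathρ_bk (p q j : ℤ) (a : A p) (b : A q) (v : Q.V j × Q.V (j - 1)) :
    Q.pathρ (p + q) j (DGLA.bk (K := K) (A := A) p q a b) v
      = gcast (C := fun m => Q.V m × Q.V (m - 1)) (show p + (q + j) = p + q + j by ring)
          (Q.pathρ p (q + j) a (Q.pathρ q j b v))
        + ((-1 : K) ^ (p * q)) • gcast (C := fun m => Q.V m × Q.V (m - 1))
          (show q + (p + j) = p + q + j by ring) (Q.pathρ q (p + j) b (Q.pathρ p j a v)) := by
  obtain ⟨x, y⟩ := v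
  simp only [pathρ_apply, gcast_pair, Prod.smul_mk, Prod.mk_add_mk, Prod.mk.injEq]
  refine ⟨Q.compat p q j a b x, ?_⟩
  simp only [map_smul, Q.ρ_gcast, Q.compat, gcast_add, gcast_smul, gcast_gcast, smul_add,
    smul_smul, zpow_add₀ (neg_ne_zero.2 (one_ne_zero (α := K)))]
  congr 2; ring

/-- The based path space `P Q`: pairs `(x, h)` with `d (x, h) = (d x, x - d h)` and
`a • (x, h) = (a • x, (-1)^|a| a • h)`. -/
noncomputable def pathSpace : RepObj K A where
  V n := ModuleCat.of K (Q.V n × Q.V (n - 1))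
  dV := Q.pathD
  ρ := Q.pathρ
  dV_sq := Q.pathD_pathD
  leibniz := Q.pathD_pathρ
  compat := Q.pathρ_bk

noncomputable def pathSpaceπ : Q.pathSpace ⟶ Q where
  f _ := LinearMap.fst K _ _
  comm_d _ _ := rfl
  comm_ρ _ _ _ _ := rfl

lemma isSurj_pathSpaceπ : RepHom.IsSurj Q.pathSpaceπ := fun _ x => ⟨(x, 0), rfl⟩

lemma comp_pathSpaceπ_eq_dTo {X : RepObj K A} (H : X ⟶ Q.pathSpace) {n : ℤ} {x : X.V n}
    (hx : X.dV n x = 0) : (H ≫ Q.pathSpaceπ).f n x = Q.dTo n (H.f n x).2 := by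
  have h : Q.pathD n (H.f n x) = 0 := (H.comm_d n x).symm.trans (by rw [hx, map_zero]; rfl)
  rw [← Prod.mk.eta (p := H.f n x), pathD_apply, Prod.ext_iff] at h
  replace h := h.2
  rw [Prod.snd_zero, sub_eq_zero, gcast_eq_iff, gcast_gcast] at h
  exact h.trans (Q.dTo_apply n _).symm

end PathSpace

end RepObj

namespace RepHom

lemma isSurj_to_zeroRep {X : RepObj K A} (φ : X ⟶ zeroRep K A) : IsSurj φ :=
  fun _ _ => ⟨0, Subsingleton.elim (α := PUnit) _ _⟩

lemma IsQis.of_hasLLP_surj {X Q : RepObj K A} {i : X ⟶ Q}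
    (hi : HasLLP (fun _ _ p => IsSurj p) i) : IsQis i := by
  obtain ⟨r, hir, -⟩ := hi (0 : X ⟶ zeroRep K A) (isSurj_to_zeroRep _) (𝟙 X) 0
    (hom_ext fun _ _ => Subsingleton.elim (α := PUnit) _ _)
  have hri : ∀ n x, r.f n (i.f n x) = x := fun n x => by rw [← comp_f, hir, id_f]
  rw [isQis_iff]
  refine ⟨fun n y hy => ?_,
    fun n x _ ⟨z, hz⟩ => ⟨r.f (n - 1) z, by rw [← map_dTo, ← hz, hri]⟩⟩
  obtain ⟨H, -, hH⟩ := hi Q.pathSpaceπ Q.isSurj_pathSpaceπ 0 (𝟙 Q - r ≫ i)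
    (hom_ext fun n x => by simp [hri])
  have hHy := Q.comp_pathSpaceπ_eq_dTo H hy
  rw [hH, sub_f, id_f, comp_f] at hHy
  refine ⟨r.f n y, -(H.f n y).2, map_cycle r hy, ?_⟩
  rw [map_neg, ← hHy]
  abel

end RepHom

namespace Attach

open Finsupp

variable (M : RepObj K A) {ι : Type} (deg : ι → ℤ)

inductive Term : ℤ → Type
  | old (i : ℤ) : M.V i → Term i
  | gen (g : ι) : Term (deg g)
  | act (p j : ℤ) : A p → Term j → Term (p + j)
  | diff (n : ℤ) : Term n → Term (n + 1)

abbrev Chain (n : ℤ) : Type := Term M deg n →₀ K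

noncomputable def chainD (n : ℤ) : Chain M deg n →ₗ[K] Chain M deg (n + 1) :=
  lmapDomain K K (Term.diff n)

noncomputable def chainρ (p : ℤ) (a : A p) (j : ℤ) :
    Chain M deg j →ₗ[K] Chain M deg (p + j) :=
  lmapDomain K K (Term.act p j a)

@[simp] lemma chainD_single (n : ℤ) (t : Term M deg n) (c : K) :
    chainD M deg n (single t c) = single (t.diff n) c :=
  mapDomain_single

@[simp] lemma chainρ_single (p : ℤ) (a : A p) (j : ℤ) (t : Term M deg j) (c : K) :
    chainρ M deg p a j (single t c) = single (t.act p j a) c :=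
  mapDomain_single

variable (dgen : ∀ g, Chain M deg (deg g + 1))

/-- The laws of a representation, `M`'s structure, and `d (gen g) = dgen g`, each as
`lhs - rhs`, closed under `d` and the action. -/
inductive Rel : ∀ n, Chain M deg n → Prop
  | act_add (p j : ℤ) (a b : A p) (t : Term M deg j) :
      Rel (p + j) (single (t.act p j (a + b)) 1 - (single (t.act p j a) 1 + single (t.act p j b) 1))
  | act_smul (p j : ℤ) (c : K) (a : A p) (t : Term M deg j) :
      Rel (p + j) (single (t.act p j (c • a)) 1 - c • single (t.act p j a) 1)
  | leibniz (p j : ℤ) (a : A p) (t : Term M deg j) :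
      Rel (p + j + 1) (single ((t.act p j a).diff (p + j)) 1
        - (gcast (C := Chain M deg) (show p + 1 + j = p + j + 1 by ring)
            (single (t.act (p + 1) j (DGLA.d (K := K) (A := A) p a)) 1)
          + (-1 : K) ^ p • gcast (C := Chain M deg) (show p + (j + 1) = p + j + 1 by ring)
            (single ((t.diff j).act p (j + 1) a) 1)))
  | compat (p q j : ℤ) (a : A p) (b : A q) (t : Term M deg j) :
      Rel (p + q + j) (single (t.act (p + q) j (DGLA.bk (K := K) (A := A) p q a b)) 1
        - (gcast (C := Chain M deg) (show p + (q + j) = p + q + j by ring)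
            (single ((t.act q j b).act p (q + j) a) 1)
          + (-1 : K) ^ (p * q) • gcast (C := Chain M deg) (show q + (p + j) = p + q + j by ring)
            (single ((t.act p j a).act q (p + j) b) 1)))
  | diff_diff (n : ℤ) (t : Term M deg n) : Rel (n + 1 + 1) (single ((t.diff n).diff (n + 1)) 1)
  | old_add (i : ℤ) (m m' : M.V i) :
      Rel i (single (.old i (m + m')) 1 - (single (.old i m) 1 + single (.old i m') 1))
  | old_smul (i : ℤ) (c : K) (m : M.V i) :
      Rel i (single (.old i (c • m)) 1 - c • single (.old i m) 1)
  | old_diff (i : ℤ) (m : M.V i) :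
      Rel (i + 1) (single ((Term.old i m).diff i) 1 - single (.old (i + 1) (M.dV i m)) 1)
  | old_act (p j : ℤ) (a : A p) (m : M.V j) :
      Rel (p + j) (single ((Term.old j m).act p j a) 1 - single (.old (p + j) (M.ρ p j a m)) 1)
  | gen_diff (g : ι) : Rel (deg g + 1) (single ((Term.gen g).diff (deg g)) 1 - dgen g)
  | chainD {n : ℤ} {x : Chain M deg n} : Rel n x → Rel (n + 1) (chainD M deg n x)
  | chainρ (p : ℤ) (a : A p) {j : ℤ} {x : Chain M deg j} :
      Rel j x → Rel (p + j) (chainρ M deg p a j x)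

noncomputable def relations (n : ℤ) : Submodule K (Chain M deg n) :=
  Submodule.span K {x | Rel M deg dgen n x}

lemma relations_le_comap_chainD (n : ℤ) :
    relations M deg dgen n ≤ (relations M deg dgen (n + 1)).comap (chainD M deg n) :=
  Submodule.span_le.2 fun _ hx => Submodule.subset_span (Rel.chainD hx)

lemma relations_le_comap_chainρ (p : ℤ) (a : A p) (j : ℤ) :
    relations M deg dgen j ≤ (relations M deg dgen (p + j)).comap (chainρ M deg p a j) :=
  Submodule.span_le.2 fun _ hx => Submodule.subset_span (Rel.chainρ p a hx)

abbrev Piece (n : ℤ) : Type := Chain M deg n ⧸ relations M deg dgen n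

noncomputable def pieceMk (n : ℤ) : Chain M deg n →ₗ[K] Piece M deg dgen n :=
  (relations M deg dgen n).mkQ

variable {M deg dgen}

lemma pieceMk_eq_zero_of_rel {n : ℤ} {x : Chain M deg n} (h : Rel M deg dgen n x) :
    pieceMk M deg dgen n x = 0 :=
  (Submodule.Quotient.mk_eq_zero _).2 (Submodule.subset_span h)

lemma pieceMk_eq_of_rel {n : ℤ} {x y : Chain M deg n} (h : Rel M deg dgen n (x - y)) :
    pieceMk M deg dgen n x = pieceMk M deg dgen n y :=
  (Submodule.Quotient.eq _).2 (Submodule.subset_span h)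

lemma pieceMk_gcast {n n' : ℤ} (h : n = n') (x : Chain M deg n) :
    gcast (C := Piece M deg dgen) h (pieceMk M deg dgen n x)
      = pieceMk M deg dgen n' (gcast (C := Chain M deg) h x) := by
  subst h; rfl

lemma piece_ext {n : ℤ} {N : Type} [AddCommGroup N] [Module K N]
    {F G : Piece M deg dgen n →ₗ[K] N}
    (h : ∀ t : Term M deg n,
      F (pieceMk M deg dgen n (single t 1)) = G (pieceMk M deg dgen n (single t 1))) :
    F = G :=
  Submodule.linearMap_qext _ (lhom_ext' fun t => LinearMap.ext_ring (h t))

variable (M deg dgen)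

noncomputable def pieceD (n : ℤ) : Piece M deg dgen n →ₗ[K] Piece M deg dgen (n + 1) :=
  Submodule.mapQ _ _ (chainD M deg n) (relations_le_comap_chainD M deg dgen n)

noncomputable def pieceρAux (p : ℤ) (a : A p) (j : ℤ) :
    Piece M deg dgen j →ₗ[K] Piece M deg dgen (p + j) :=
  Submodule.mapQ _ _ (chainρ M deg p a j) (relations_le_comap_chainρ M deg dgen p a j)

variable {M deg dgen}

@[simp] lemma pieceD_pieceMk (n : ℤ) (x : Chain M deg n) :
    pieceD M deg dgen n (pieceMk M deg dgen n x)
      = pieceMk M deg dgen (n + 1) (chainD M deg n x) :=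
  rfl

@[simp] lemma pieceρAux_pieceMk (p : ℤ) (a : A p) (j : ℤ) (x : Chain M deg j) :
    pieceρAux M deg dgen p a j (pieceMk M deg dgen j x)
      = pieceMk M deg dgen (p + j) (chainρ M deg p a j x) :=
  rfl

variable (M deg dgen)

noncomputable def pieceρ (p j : ℤ) :
    A p →ₗ[K] Piece M deg dgen j →ₗ[K] Piece M deg dgen (p + j) where
  toFun a := pieceρAux M deg dgen p a j
  map_add' a b := piece_ext fun t => by
    simpa [← map_add] using pieceMk_eq_of_rel (Rel.act_add p j a b t)
  map_smul' c a := piece_ext fun t => by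
    simpa [← map_smul] using pieceMk_eq_of_rel (Rel.act_smul p j c a t)

variable {M deg dgen}

@[simp] lemma pieceρ_pieceMk (p : ℤ) (a : A p) (j : ℤ) (x : Chain M deg j) :
    pieceρ M deg dgen p j a (pieceMk M deg dgen j x)
      = pieceMk M deg dgen (p + j) (chainρ M deg p a j x) :=
  rfl

lemma pieceD_pieceD (n : ℤ) (v : Piece M deg dgen n) :
    pieceD M deg dgen (n + 1) (pieceD M deg dgen n v) = 0 :=
  LinearMap.congr_fun (piece_ext (F := pieceD M deg dgen (n + 1) ∘ₗ pieceD M deg dgen n)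
    (G := 0) fun t => by simpa using pieceMk_eq_zero_of_rel (Rel.diff_diff n t)) v

lemma pieceD_pieceρ (p j : ℤ) (a : A p) (v : Piece M deg dgen j) :
    pieceD M deg dgen (p + j) (pieceρ M deg dgen p j a v)
      = gcast (C := Piece M deg dgen) (show p + 1 + j = p + j + 1 by ring)
          (pieceρ M deg dgen (p + 1) j (DGLA.d (K := K) (A := A) p a) v)
        + ((-1 : K) ^ p) • gcast (C := Piece M deg dgen) (show p + (j + 1) = p + j + 1 by ring)
          (pieceρ M deg dgen p (j + 1) a (pieceD M deg dgen j v)) := by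
  refine LinearMap.congr_fun (piece_ext
    (F := pieceD M deg dgen (p + j) ∘ₗ pieceρ M deg dgen p j a)
    (G := lgcast (K := K) (C := Piece M deg dgen) (show p + 1 + j = p + j + 1 by ring)
        ∘ₗ pieceρ M deg dgen (p + 1) j (DGLA.d (K := K) (A := A) p a)
      + ((-1 : K) ^ p) • lgcast (K := K) (C := Piece M deg dgen)
        (show p + (j + 1) = p + j + 1 by ring) ∘ₗ pieceρ M deg dgen p (j + 1) a
          ∘ₗ pieceD M deg dgen j) fun t => ?_) v |>.trans (by simp)
  simpa [pieceMk_gcast] using pieceMk_eq_of_rel (Rel.leibniz p j a t)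

lemma pieceρ_bk (p q j : ℤ) (a : A p) (b : A q) (v : Piece M deg dgen j) :
    pieceρ M deg dgen (p + q) j (DGLA.bk (K := K) (A := A) p q a b) v
      = gcast (C := Piece M deg dgen) (show p + (q + j) = p + q + j by ring)
          (pieceρ M deg dgen p (q + j) a (pieceρ M deg dgen q j b v))
        + ((-1 : K) ^ (p * q)) • gcast (C := Piece M deg dgen)
          (show q + (p + j) = p + q + j by ring)
          (pieceρ M deg dgen q (p + j) b (pieceρ M deg dgen p j a v)) := by
  refine LinearMap.congr_fun (piece_ext
    (F := pieceρ M deg dgen (p + q) j (DGLA.bk (K := K) (A := A) p q a b))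
    (G := lgcast (K := K) (C := Piece M deg dgen) (show p + (q + j) = p + q + j by ring)
        ∘ₗ pieceρ M deg dgen p (q + j) a ∘ₗ pieceρ M deg dgen q j b
      + ((-1 : K) ^ (p * q)) • lgcast (K := K) (C := Piece M deg dgen)
        (show q + (p + j) = p + q + j by ring) ∘ₗ pieceρ M deg dgen q (p + j) b
          ∘ₗ pieceρ M deg dgen p j a) fun t => ?_) v |>.trans (by simp)
  simpa [pieceMk_gcast] using pieceMk_eq_of_rel (Rel.compat p q j a b t)

variable (M deg dgen)

noncomputable def oldPiece (i : ℤ) : M.V i →ₗ[K] Piece M deg dgen i where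
  toFun m := pieceMk M deg dgen i (single (Term.old i m) 1)
  map_add' m m' := (pieceMk_eq_of_rel (Rel.old_add i m m')).trans (map_add _ _ _)
  map_smul' c m := (pieceMk_eq_of_rel (Rel.old_smul i c m)).trans (map_smul _ _ _)

variable {M deg dgen}

lemma pieceD_oldPiece (i : ℤ) (m : M.V i) :
    oldPiece M deg dgen (i + 1) (M.dV i m) = pieceD M deg dgen i (oldPiece M deg dgen i m) :=
  (pieceMk_eq_of_rel (Rel.old_diff i m)).symm.trans (by simp [oldPiece])

lemma pieceρ_oldPiece (p j : ℤ) (a : A p) (m : M.V j) :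
    oldPiece M deg dgen (p + j) (M.ρ p j a m)
      = pieceρ M deg dgen p j a (oldPiece M deg dgen j m) :=
  (pieceMk_eq_of_rel (Rel.old_act p j a m)).symm.trans (by simp [oldPiece])

end Attach

namespace RepObj

open Attach Finsupp

variable (M : RepObj K A) {ι : Type} (deg : ι → ℤ) (dgen : ∀ g, Chain M deg (deg g + 1))

/-- `M` with generators `g` of degree `deg g` freely attached, subject to `d g = dgen g`. -/
noncomputable def attach : RepObj K A where
  V n := ModuleCat.of K (Piece M deg dgen n)
  dV := pieceD M deg dgen
  ρ := pieceρ M deg dgen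
  dV_sq := pieceD_pieceD
  leibniz := pieceD_pieceρ
  compat := pieceρ_bk

noncomputable def toAttach : M ⟶ M.attach deg dgen where
  f i := oldPiece M deg dgen i
  comm_d i m := pieceD_oldPiece i m
  comm_ρ p j a m := pieceρ_oldPiece p j a m

noncomputable def attachGen (g : ι) : (M.attach deg dgen).V (deg g) :=
  pieceMk M deg dgen (deg g) (single (Term.gen g) 1)

lemma dV_attachGen (g : ι) :
    (M.attach deg dgen).dV (deg g) (M.attachGen deg dgen g)
      = pieceMk M deg dgen (deg g + 1) (dgen g) :=
  (pieceD_pieceMk _ _).trans ((congrArg _ (chainD_single _ _ _ _ _)).trans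
    (pieceMk_eq_of_rel (Rel.gen_diff g)))

end RepObj

namespace Attach

open Finsupp

variable {M : RepObj K A} {ι : Type} {deg : ι → ℤ} {N : RepObj K A} (φ : M ⟶ N)
  (val : ∀ g, N.V (deg g))

def Term.eval : ∀ {n : ℤ}, Term M deg n → N.V n
  | _, .old i m => φ.f i m
  | _, .gen g => val g
  | _, .act p j a t => N.ρ p j a (t.eval)
  | _, .diff n t => N.dV n (t.eval)

noncomputable def evalChain (n : ℤ) : Chain M deg n →ₗ[K] N.V n :=
  linearCombination K (fun t : Term M deg n => t.eval φ val)

@[simp] lemma evalChain_single {n : ℤ} (t : Term M deg n) (c : K) :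
    evalChain φ val n (single t c) = c • t.eval φ val :=
  linearCombination_single _ _ _

lemma evalChain_gcast {n n' : ℤ} (h : n = n') (x : Chain M deg n) :
    evalChain φ val n' (gcast (C := Chain M deg) h x)
      = gcast (C := fun m => N.V m) h (evalChain φ val n x) := by
  subst h; rfl

@[simp] lemma evalChain_chainD (n : ℤ) (x : Chain M deg n) :
    evalChain φ val (n + 1) (chainD M deg n x) = N.dV n (evalChain φ val n x) := by
  induction x using Finsupp.induction_linear with
  | zero => simp
  | add x y hx hy => simp only [map_add, hx, hy]
  | single t c => simp [Term.eval]

@[simp] lemma evalChain_chainρ (p : ℤ) (a : A p) (j : ℤ) (x : Chain M deg j) :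
    evalChain φ val (p + j) (chainρ M deg p a j x) = N.ρ p j a (evalChain φ val j x) := by
  induction x using Finsupp.induction_linear with
  | zero => simp
  | add x y hx hy => simp only [map_add, hx, hy]
  | single t c => simp [Term.eval]

variable {φ val} {dgen : ∀ g, Chain M deg (deg g + 1)}
  (hval : ∀ g, N.dV (deg g) (val g) = evalChain φ val (deg g + 1) (dgen g))
include hval

lemma evalChain_eq_zero_of_rel {n : ℤ} {x : Chain M deg n} (h : Rel M deg dgen n x) :
    evalChain φ val n x = 0 := by
  induction h <;>
    simp [Term.eval, evalChain_gcast, N.dV_sq, N.leibniz, N.compat, φ.comm_d, φ.comm_ρ, *]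

variable (dgen)

noncomputable def liftPiece (n : ℤ) : Piece M deg dgen n →ₗ[K] N.V n :=
  (relations M deg dgen n).liftQ (evalChain φ val n)
    (Submodule.span_le.2 fun _ hx => LinearMap.mem_ker.2 (evalChain_eq_zero_of_rel hval hx))

@[simp] lemma liftPiece_pieceMk (n : ℤ) (x : Chain M deg n) :
    liftPiece dgen hval n (pieceMk M deg dgen n x) = evalChain φ val n x := rfl

end Attach

namespace RepObj

open Attach Finsupp

variable {M : RepObj K A} {ι : Type} {deg : ι → ℤ} {dgen : ∀ g, Chain M deg (deg g + 1)}
  {N : RepObj K A}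

noncomputable def attachLift (φ : M ⟶ N) (val : ∀ g, N.V (deg g))
    (hval : ∀ g, N.dV (deg g) (val g) = evalChain φ val (deg g + 1) (dgen g)) :
    M.attach deg dgen ⟶ N where
  f := liftPiece dgen hval
  comm_d n v := by
    obtain ⟨x, rfl⟩ := Submodule.mkQ_surjective _ v
    exact (liftPiece_pieceMk dgen hval (n + 1) _).trans (evalChain_chainD φ val n x)
  comm_ρ p j a v := by
    obtain ⟨x, rfl⟩ := Submodule.mkQ_surjective _ v
    exact (liftPiece_pieceMk dgen hval (p + j) _).trans (evalChain_chainρ φ val p a j x)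

variable (φ : M ⟶ N) (val : ∀ g, N.V (deg g))
  (hval : ∀ g, N.dV (deg g) (val g) = evalChain φ val (deg g + 1) (dgen g))

@[simp] lemma toAttach_attachLift : M.toAttach deg dgen ≫ attachLift φ val hval = φ :=
  RepHom.hom_ext fun i m => (liftPiece_pieceMk dgen hval i _).trans (by simp [Term.eval])

@[simp] lemma attachLift_attachGen (g : ι) :
    (attachLift φ val hval).f (deg g) (M.attachGen deg dgen g) = val g :=
  (liftPiece_pieceMk dgen hval _ _).trans (by simp [Term.eval])

lemma attach_hom_ext {ψ ψ' : M.attach deg dgen ⟶ N}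
    (hM : M.toAttach deg dgen ≫ ψ = M.toAttach deg dgen ≫ ψ')
    (hgen : ∀ g, ψ.f (deg g) (M.attachGen deg dgen g) = ψ'.f (deg g) (M.attachGen deg dgen g)) :
    ψ = ψ' := by
  suffices key : ∀ {n} (t : Term M deg n), ψ.f n (pieceMk M deg dgen n (single t 1))
      = ψ'.f n (pieceMk M deg dgen n (single t 1)) from
    RepHom.hom_ext fun n => LinearMap.congr_fun (piece_ext (F := ψ.f n) (G := ψ'.f n) key)
  intro n t
  induction t with
  | old i m => exact RepHom.congr_f hM i m
  | gen g => exact hgen g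
  | act p j a t ih =>
    have e : pieceMk M deg dgen (p + j) (single (t.act p j a) 1)
        = (M.attach deg dgen).ρ p j a (pieceMk M deg dgen j (single t 1)) :=
      congrArg _ (chainρ_single M deg p a j t 1).symm
    rw [e]
    exact (ψ.comm_ρ p j a _).trans ((congrArg _ ih).trans (ψ'.comm_ρ p j a _).symm)
  | diff n t ih =>
    have e : pieceMk M deg dgen (n + 1) (single (t.diff n) 1)
        = (M.attach deg dgen).dV n (pieceMk M deg dgen n (single t 1)) :=
      congrArg _ (chainD_single M deg n t 1).symm
    rw [e]
    exact (ψ.comm_d n _).trans ((congrArg _ ih).trans (ψ'.comm_d n _).symm)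

section Disk

variable (X : RepObj K A) {D : Type} (ddeg : D → ℤ)

abbrev diskDeg : D ⊕ D → ℤ
  | Sum.inl d => ddeg d
  | Sum.inr d => ddeg d + 1

/-- Each `d : D` contributes a disk: a generator `inl d` with differential the generator
`inr d`. -/
noncomputable def diskBoundary : ∀ g, Chain X (diskDeg ddeg) (diskDeg ddeg g + 1)
  | Sum.inl d => single (Term.gen (Sum.inr d)) 1
  | Sum.inr _ => 0

noncomputable abbrev diskAttach : RepObj K A := X.attach (diskDeg ddeg) (X.diskBoundary ddeg)

variable {X ddeg} {N : RepObj K A}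

def diskVal (e : ∀ d, N.V (ddeg d)) : ∀ g, N.V (diskDeg ddeg g)
  | Sum.inl d => e d
  | Sum.inr d => N.dV (ddeg d) (e d)

noncomputable def diskLift (φ : X ⟶ N) (e : ∀ d, N.V (ddeg d)) : X.diskAttach ddeg ⟶ N :=
  attachLift φ (diskVal e) <| by
    rintro (d | d)
    · exact (one_smul K _).symm.trans
        (evalChain_single φ (diskVal e) (Term.gen (Sum.inr d)) 1).symm
    · simp [diskVal, diskBoundary, N.dV_sq]

@[simp] lemma toAttach_diskLift (φ : X ⟶ N) (e : ∀ d, N.V (ddeg d)) :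
    X.toAttach _ _ ≫ diskLift φ e = φ :=
  toAttach_attachLift _ _ _

@[simp] lemma diskLift_attachGen_inl (φ : X ⟶ N) (e : ∀ d, N.V (ddeg d)) (d : D) :
    (diskLift φ e).f (ddeg d) (X.attachGen _ _ (Sum.inl d)) = e d :=
  attachLift_attachGen _ _ _ (Sum.inl d)

lemma dV_attachGen_inl (d : D) :
    (X.diskAttach ddeg).dV (ddeg d) (X.attachGen _ _ (Sum.inl d)) = X.attachGen _ _ (Sum.inr d) :=
  X.dV_attachGen _ _ (Sum.inl d)

lemma hasLLP_toDiskAttach :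
    HasLLP (fun _ _ p => RepHom.IsSurj p) (X.toAttach _ (X.diskBoundary ddeg)) := by
  intro E B p hp u v huv
  choose e he using fun d => hp (ddeg d) (v.f (ddeg d) (X.attachGen _ _ (Sum.inl d)))
  refine ⟨diskLift u e, toAttach_diskLift u e,
    attach_hom_ext (by rw [← Category.assoc, toAttach_diskLift, huv]) ?_⟩
  rintro (d | d)
  · exact (congrArg (p.f _) (diskLift_attachGen_inl u e d)).trans (he d)
  · have h := (diskLift u e ≫ p).comm_d (ddeg d) (X.attachGen _ _ (Sum.inl d))
    rw [dV_attachGen_inl] at h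
    rw [h, RepHom.comp_f, diskLift_attachGen_inl, he, ← v.comm_d, dV_attachGen_inl]

end Disk

lemma exists_hasLLP_surj_isQis_isSurj {X Y : RepObj K A} (f : X ⟶ Y) :
    ∃ (Z : RepObj K A) (i : X ⟶ Z) (q : Z ⟶ Y),
      HasLLP (fun _ _ p => RepHom.IsSurj p) i ∧ RepHom.IsQis i ∧ RepHom.IsSurj q ∧
        i ≫ q = f :=
  ⟨_, _, _, hasLLP_toDiskAttach, RepHom.IsQis.of_hasLLP_surj hasLLP_toDiskAttach,
    fun n y => ⟨_, diskLift_attachGen_inl f (fun d : Σ n, Y.V n => d.2) ⟨n, y⟩⟩,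
    toAttach_diskLift f fun d : Σ n, Y.V n => d.2⟩

section Cell

variable (Z : RepObj K A) {I : Type} (cdeg : I → ℤ) (cval : ∀ c, Z.V (cdeg c + 1))

noncomputable def cellBoundary (c : I) : Chain Z cdeg (cdeg c + 1) :=
  single (Term.old _ (cval c)) 1

noncomputable abbrev cellAttach : RepObj K A := Z.attach cdeg (Z.cellBoundary cdeg cval)

variable {Z cdeg cval} {N : RepObj K A}

noncomputable def cellLift (φ : Z ⟶ N) (w : ∀ c, N.V (cdeg c))
    (hw : ∀ c, N.dV (cdeg c) (w c) = φ.f (cdeg c + 1) (cval c)) : Z.cellAttach cdeg cval ⟶ N :=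
  attachLift φ w (fun c => by simpa [cellBoundary, Term.eval] using hw c)

@[simp] lemma toAttach_cellLift (φ : Z ⟶ N) (w : ∀ c, N.V (cdeg c))
    (hw : ∀ c, N.dV (cdeg c) (w c) = φ.f (cdeg c + 1) (cval c)) :
    Z.toAttach _ _ ≫ cellLift φ w hw = φ :=
  toAttach_attachLift _ _ _

@[simp] lemma cellLift_attachGen (φ : Z ⟶ N) (w : ∀ c, N.V (cdeg c))
    (hw : ∀ c, N.dV (cdeg c) (w c) = φ.f (cdeg c + 1) (cval c)) (c : I) :
    (cellLift φ w hw).f (cdeg c) (Z.attachGen _ _ c) = w c :=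
  attachLift_attachGen _ _ _ c

lemma dV_cellGen (c : I) :
    (Z.cellAttach cdeg cval).dV (cdeg c) (Z.attachGen _ _ c)
      = (Z.toAttach _ (Z.cellBoundary cdeg cval)).f (cdeg c + 1) (cval c) :=
  Z.dV_attachGen _ _ c

/-- A cell lifts to a preimage of its image whose differential is the image of its boundary
(`IsTrivFib.exists_dV_eq`). -/
lemma hasLLP_toCellAttach (hcval : ∀ c, Z.dV (cdeg c + 1) (cval c) = 0) :
    HasLLP (fun _ _ p => RepHom.IsTrivFib p) (Z.toAttach _ (Z.cellBoundary cdeg cval)) := by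
  intro E B p hp u v huv
  have hcell : ∀ c, ∃ e : E.V (cdeg c),
      E.dV (cdeg c) e = u.f (cdeg c + 1) (cval c) ∧
        p.f (cdeg c) e = v.f (cdeg c) (Z.attachGen _ _ c) :=
    fun c => hp.exists_dV_eq (RepHom.map_cycle u (hcval c)) (by
      rw [← RepHom.comp_f, huv, RepHom.comp_f, ← dV_cellGen, v.comm_d])
  choose e hde hpe using hcell
  exact ⟨cellLift u e hde, toAttach_cellLift u e hde,
    attach_hom_ext (by rw [← Category.assoc, toAttach_cellLift, huv])
      fun c => (congrArg (p.f _) (cellLift_attachGen u e hde c)).trans (hpe c)⟩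

end Cell

section SeqColimit

variable (F : ℕ ⥤ RepObj K A)

noncomputable def seqTransition (n : ℤ) (t t' : ℕ) (h : t ≤ t') :
    (F.obj t).V n →ₗ[K] (F.obj t').V n :=
  (F.map (homOfLE h)).f n

instance (n : ℤ) : DirectedSystem (fun t => (F.obj t).V n) (seqTransition F n · · ·) where
  map_self _ _ := by
    rw [seqTransition, Subsingleton.elim (homOfLE _) (𝟙 _), F.map_id]; rfl
  map_map _ _ _ _ _ _ := by
    simp only [seqTransition]; rw [← RepHom.comp_f, ← F.map_comp, homOfLE_comp]

abbrev SeqColimitPiece (n : ℤ) : Type :=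
  Module.DirectLimit (fun t => (F.obj t).V n) (seqTransition F n)

variable {F} in
noncomputable def seqColimitOf (t : ℕ) (n : ℤ) : (F.obj t).V n →ₗ[K] SeqColimitPiece F n :=
  Module.DirectLimit.of K ℕ _ (seqTransition F n) t

lemma seqColimitOf_map {t t' : ℕ} (h : t ≤ t') (n : ℤ) (x : (F.obj t).V n) :
    seqColimitOf t' n ((F.map (homOfLE h)).f n x) = seqColimitOf t n x :=
  Module.DirectLimit.of_f (f := seqTransition F n)

lemma seqColimitOf_gcast (t : ℕ) {n n' : ℤ} (h : n = n') (x : (F.obj t).V n) :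
    gcast (C := SeqColimitPiece F) h (seqColimitOf t n x)
      = seqColimitOf t n' (gcast (C := fun m => (F.obj t).V m) h x) := by
  subst h; rfl

lemma SeqColimitPiece.induction_on {n : ℤ} {P : SeqColimitPiece F n → Prop}
    (v : SeqColimitPiece F n) (h : ∀ t x, P (seqColimitOf t n x)) : P v :=
  Module.DirectLimit.induction_on v h

noncomputable def seqColimitLift {N : Type} [AddCommGroup N] [Module K N] (n : ℤ)
    (g : ∀ t, (F.obj t).V n →ₗ[K] N)
    (hg : ∀ t t' (h : t ≤ t') x, g t' ((F.map (homOfLE h)).f n x) = g t x) :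
    SeqColimitPiece F n →ₗ[K] N :=
  Module.DirectLimit.lift K ℕ _ (seqTransition F n) g hg

@[simp] lemma seqColimitLift_of {N : Type} [AddCommGroup N] [Module K N] (n : ℤ)
    (g : ∀ t, (F.obj t).V n →ₗ[K] N)
    (hg : ∀ t t' (h : t ≤ t') x, g t' ((F.map (homOfLE h)).f n x) = g t x) (t : ℕ)
    (x : (F.obj t).V n) : seqColimitLift F n g hg (seqColimitOf t n x) = g t x :=
  Module.DirectLimit.lift_of (f := seqTransition F n) _ _ _

noncomputable def seqColimitD (n : ℤ) : SeqColimitPiece F n →ₗ[K] SeqColimitPiece F (n + 1) :=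
  seqColimitLift F n (fun t => seqColimitOf t (n + 1) ∘ₗ (F.obj t).dV n)
    fun t t' h x => by simp [← (F.map (homOfLE h)).comm_d, seqColimitOf_map]

noncomputable def seqColimitρAux (p : ℤ) (a : A p) (j : ℤ) :
    SeqColimitPiece F j →ₗ[K] SeqColimitPiece F (p + j) :=
  seqColimitLift F j (fun t => seqColimitOf t (p + j) ∘ₗ (F.obj t).ρ p j a)
    fun t t' h x => by simp [← (F.map (homOfLE h)).comm_ρ, seqColimitOf_map]

@[simp] lemma seqColimitD_of (n : ℤ) (t : ℕ) (x : (F.obj t).V n) :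
    seqColimitD F n (seqColimitOf t n x) = seqColimitOf t (n + 1) ((F.obj t).dV n x) :=
  seqColimitLift_of _ _ _ _ _ _

@[simp] lemma seqColimitρAux_of (p : ℤ) (a : A p) (j : ℤ) (t : ℕ) (x : (F.obj t).V j) :
    seqColimitρAux F p a j (seqColimitOf t j x) = seqColimitOf t (p + j) ((F.obj t).ρ p j a x) :=
  seqColimitLift_of _ _ _ _ _ _

noncomputable def seqColimitρ (p j : ℤ) :
    A p →ₗ[K] SeqColimitPiece F j →ₗ[K] SeqColimitPiece F (p + j) where
  toFun a := seqColimitρAux F p a j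
  map_add' a b := LinearMap.ext fun v => by
    induction v using SeqColimitPiece.induction_on with | h t x => simp
  map_smul' c a := LinearMap.ext fun v => by
    induction v using SeqColimitPiece.induction_on with | h t x => simp

@[simp] lemma seqColimitρ_of (p : ℤ) (a : A p) (j : ℤ) (t : ℕ) (x : (F.obj t).V j) :
    seqColimitρ F p j a (seqColimitOf t j x) = seqColimitOf t (p + j) ((F.obj t).ρ p j a x) :=
  seqColimitρAux_of F p a j t x

noncomputable def seqColimit : RepObj K A where
  V n := ModuleCat.of K (SeqColimitPiece F n)
  dV := seqColimitD F
  ρ := seqColimitρ F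
  dV_sq n v := by
    induction v using SeqColimitPiece.induction_on with
    | h t x => simp [(F.obj t).dV_sq]
  leibniz p j a v := by
    induction v using SeqColimitPiece.induction_on with
    | h t x => simp [seqColimitOf_gcast, (F.obj t).leibniz]
  compat p q j a b v := by
    induction v using SeqColimitPiece.induction_on with
    | h t x => simp [seqColimitOf_gcast, (F.obj t).compat]

noncomputable def seqColimitι (t : ℕ) : F.obj t ⟶ seqColimit F where
  f n := seqColimitOf t n
  comm_d n x := (seqColimitD_of F n t x).symm
  comm_ρ p j a x := (seqColimitρ_of F p a j t x).symm

@[simp] lemma map_seqColimitι {t t' : ℕ} (h : t ≤ t') :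
    F.map (homOfLE h) ≫ seqColimitι F t' = seqColimitι F t :=
  RepHom.hom_ext fun n x => seqColimitOf_map F h n x

variable {F}

lemma exists_seqColimitι_eq {n : ℤ} (v : (seqColimit F).V n) :
    ∃ t x, (seqColimitι F t).f n x = v :=
  Module.DirectLimit.exists_of v

lemma exists_map_eq_zero_of_seqColimitι_eq_zero {t : ℕ} {n : ℤ} {x : (F.obj t).V n}
    (hx : (seqColimitι F t).f n x = 0) : ∃ t', ∃ h : t ≤ t', (F.map (homOfLE h)).f n x = 0 :=
  Module.DirectLimit.of.zero_exact hx

variable {Y : RepObj K A}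

lemma seqColimit_hom_ext {φ ψ : seqColimit F ⟶ Y}
    (h : ∀ t, seqColimitι F t ≫ φ = seqColimitι F t ≫ ψ) : φ = ψ :=
  RepHom.hom_ext fun n v => by
    obtain ⟨t, x, rfl⟩ := exists_seqColimitι_eq v
    exact RepHom.congr_f (h t) n x

noncomputable def seqColimitDesc (c : F ⟶ (Functor.const ℕ).obj Y) : seqColimit F ⟶ Y where
  f n := seqColimitLift F n (fun t => (c.app t).f n) fun t t' h x => by
    rw [← RepHom.comp_f, c.naturality]; rfl
  comm_d n v := by
    induction v using SeqColimitPiece.induction_on with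
    | h t x =>
      change seqColimitLift F (n + 1) _ _ (seqColimitD F n (seqColimitOf t n x))
        = Y.dV n (seqColimitLift F n _ _ (seqColimitOf t n x))
      rw [seqColimitD_of, seqColimitLift_of, seqColimitLift_of]
      exact (c.app t).comm_d n x
  comm_ρ p j a v := by
    induction v using SeqColimitPiece.induction_on with
    | h t x =>
      change seqColimitLift F (p + j) _ _ (seqColimitρ F p j a (seqColimitOf t j x))
        = Y.ρ p j a (seqColimitLift F j _ _ (seqColimitOf t j x))
      rw [seqColimitρ_of, seqColimitLift_of, seqColimitLift_of]
      exact (c.app t).comm_ρ p j a x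

@[simp] lemma seqColimitι_desc (c : F ⟶ (Functor.const ℕ).obj Y) (t : ℕ) :
    seqColimitι F t ≫ seqColimitDesc c = c.app t :=
  RepHom.hom_ext fun n x => by
    simp only [seqColimitDesc, seqColimitι, RepHom.comp_f]
    exact seqColimitLift_of F n _ _ t x

end SeqColimit

section KillTower

variable {Y : RepObj K A} (T : Over Y)

/-- Cells killing the cycles of `T.left` whose image in `Y` is a boundary (`inl`), and
spheres hitting the cycles of `Y` (`inr`). -/
abbrev KillCell : Type :=
  (Σ n : ℤ, {z : T.left.V n // T.left.dV n z = 0 ∧ ∃ y, T.hom.f n z = Y.dTo n y})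
    ⊕ (Σ n : ℤ, {y : Y.V n // Y.dV n y = 0})

abbrev killCellDeg : KillCell T → ℤ
  | Sum.inl c => c.1 - 1
  | Sum.inr c => c.1

noncomputable def killCellBoundary : ∀ c, T.left.V (killCellDeg T c + 1)
  | Sum.inl c => gcast (C := fun m => T.left.V m) (show c.1 = c.1 - 1 + 1 by omega) c.2.1
  | Sum.inr _ => 0

noncomputable def killCellImage : ∀ c, Y.V (killCellDeg T c)
  | Sum.inl c => c.2.2.2.choose
  | Sum.inr c => c.2.1

lemma dV_killCellBoundary : ∀ c, T.left.dV _ (killCellBoundary T c) = 0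
  | Sum.inl c => by rw [killCellBoundary, dV_gcast, c.2.2.1, gcast_zero]
  | Sum.inr _ => map_zero _

lemma dV_killCellImage : ∀ c, Y.dV _ (killCellImage T c) = T.hom.f _ (killCellBoundary T c)
  | Sum.inl c => by
    conv_rhs => rw [killCellBoundary, RepHom.f_gcast, c.2.2.2.choose_spec, dTo_apply, gcast_gcast]
    rfl
  | Sum.inr c => c.2.2.trans (map_zero _).symm

noncomputable def killStep : Over Y :=
  Over.mk (cellLift T.hom (killCellImage T) (dV_killCellImage T))

noncomputable def toKillStep : T.left ⟶ (killStep T).left :=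
  T.left.toAttach _ (T.left.cellBoundary (killCellDeg T) (killCellBoundary T))

lemma toKillStep_hom : toKillStep T ≫ (killStep T).hom = T.hom :=
  toAttach_cellLift T.hom (killCellImage T) (dV_killCellImage T)

lemma hasLLP_toKillStep : HasLLP (fun _ _ p => RepHom.IsTrivFib p) (toKillStep T) :=
  hasLLP_toCellAttach (dV_killCellBoundary T)

lemma exists_toKillStep_eq_dTo {n : ℤ} {z : T.left.V n} (hz : T.left.dV n z = 0)
    (hzY : ∃ y, T.hom.f n z = Y.dTo n y) :
    ∃ w, (toKillStep T).f n z = (killStep T).left.dTo n w := by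
  let c : KillCell T := Sum.inl ⟨n, z, hz, hzY⟩
  have hc := dV_cellGen (Z := T.left) (cdeg := killCellDeg T) (cval := killCellBoundary T) c
  change (killStep T).left.dV (n - 1) _
    = (toKillStep T).f (n - 1 + 1) (gcast (C := fun m => T.left.V m) (by omega) z) at hc
  refine ⟨T.left.attachGen _ _ c, Eq.trans ?_ ((killStep T).left.dTo_apply n _).symm⟩
  rw [hc, RepHom.f_gcast, gcast_gcast]
  rfl

lemma exists_cycle_killStep_hom_eq {n : ℤ} {y : Y.V n} (hy : Y.dV n y = 0) :
    ∃ w, (killStep T).left.dV n w = 0 ∧ (killStep T).hom.f n w = y :=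
  ⟨T.left.attachGen _ _ (Sum.inr ⟨n, y, hy⟩ : KillCell T),
    (dV_cellGen _).trans (map_zero _),
    cellLift_attachGen T.hom (killCellImage T) (dV_killCellImage T) (Sum.inr ⟨n, y, hy⟩)⟩

noncomputable def killTower : ℕ → Over Y
  | 0 => T
  | t + 1 => killStep (killTower t)

noncomputable def killDiagram : ℕ ⥤ RepObj K A :=
  Functor.ofSequence fun t => toKillStep (killTower T t)

lemma killDiagram_map_succ (t : ℕ) :
    (killDiagram T).map (homOfLE (t.le_add_right 1)) = toKillStep (killTower T t) :=
  Functor.ofSequence_map_homOfLE_succ _ t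

noncomputable def killCocone : killDiagram T ⟶ (Functor.const ℕ).obj Y :=
  NatTrans.ofSequence (fun t => (killTower T t).hom) fun t => by
    rw [killDiagram_map_succ, Functor.const_obj_map]
    exact (toKillStep_hom (killTower T t)).trans (Category.comp_id _).symm

noncomputable def killColimitHom : seqColimit (killDiagram T) ⟶ Y :=
  seqColimitDesc (killCocone T)

variable {T}

lemma seqColimitι_toKillStep {t : ℕ} {n : ℤ} (z : (killTower T t).left.V n) :
    (seqColimitι (killDiagram T) (t + 1)).f n ((toKillStep (killTower T t)).f n z)
      = (seqColimitι (killDiagram T) t).f n z :=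
  (congrArg _ (RepHom.congr_f (killDiagram_map_succ T t) n z).symm).trans
    (RepHom.congr_f (map_seqColimitι (killDiagram T) (t.le_add_right 1)) n z)

lemma killColimitHom_seqColimitι (t : ℕ) {n : ℤ} (x : (killTower T t).left.V n) :
    (killColimitHom T).f n ((seqColimitι (killDiagram T) t).f n x) = (killTower T t).hom.f n x :=
  RepHom.congr_f (seqColimitι_desc (killCocone T) t) n x

lemma isSurj_killColimitHom (hT : RepHom.IsSurj T.hom) : RepHom.IsSurj (killColimitHom T) :=
  fun n y => by
    obtain ⟨x, rfl⟩ := hT n y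
    exact ⟨_, killColimitHom_seqColimitι 0 x⟩

lemma isQis_killColimitHom : RepHom.IsQis (killColimitHom T) := by
  rw [RepHom.isQis_iff]
  refine ⟨fun n y hy => ?_, fun n x hx ⟨y, hxy⟩ => ?_⟩
  · obtain ⟨w, hw, hwy⟩ := exists_cycle_killStep_hom_eq (killTower T 0) hy
    refine ⟨(seqColimitι (killDiagram T) 1).f n w, 0,
      ((seqColimitι (killDiagram T) 1).comm_d n w).symm.trans
        ((congrArg _ hw).trans (map_zero _)), ?_⟩
    rw [map_zero, add_zero]
    exact (killColimitHom_seqColimitι 1 w).trans hwy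
  · obtain ⟨t, z, rfl⟩ := exists_seqColimitι_eq x
    obtain ⟨t', htt', hz⟩ := exists_map_eq_zero_of_seqColimitι_eq_zero
      (((seqColimitι (killDiagram T) t).comm_d n z).trans hx)
    set z' := ((killDiagram T).map (homOfLE htt')).f n z
    have hz'Y : (killTower T t').hom.f n z' = Y.dTo n y :=
      (RepHom.congr_f ((killCocone T).naturality (homOfLE htt')) n z).trans
        ((killColimitHom_seqColimitι t z).symm.trans hxy)
    obtain ⟨w, hw⟩ := exists_toKillStep_eq_dTo (killTower T t')
      (((killDiagram T).map (homOfLE htt')).comm_d n z ▸ hz) ⟨y, hz'Y⟩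
    exact ⟨(seqColimitι (killDiagram T) (t' + 1)).f (n - 1) w,
      (RepHom.congr_f (map_seqColimitι (killDiagram T) htt') n z).symm.trans
        ((seqColimitι_toKillStep z').symm.trans ((congrArg _ hw).trans (RepHom.map_dTo _ n w)))⟩

end KillTower

section Factorization

variable {Y : RepObj K A} {T : Over Y}

/-- The lifts are built stage by stage, starting from the lifting property of `i` against
surjections and continuing with that of each cell attachment against trivial fibrations. -/
lemma hasLLP_comp_seqColimitι {X : RepObj K A} {i : X ⟶ T.left}
    (hi : HasLLP (fun _ _ p => RepHom.IsSurj p) i) :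
    HasLLP (fun _ _ p => RepHom.IsTrivFib p) (i ≫ seqColimitι (killDiagram T) 0) := by
  intro E B p hp u v huv
  set ι := seqColimitι (killDiagram T)
  obtain ⟨L₀, hiL₀, hL₀⟩ := hi p hp.1 u (ι 0 ≫ v) (huv.trans (Category.assoc _ _ _))
  have step : ∀ t (L : (killTower T t).left ⟶ E), L ≫ p = ι t ≫ v →
      ∃ L' : (killTower T (t + 1)).left ⟶ E,
        toKillStep (killTower T t) ≫ L' = L ∧ L' ≫ p = ι (t + 1) ≫ v :=
    fun t L hL => hasLLP_toKillStep (killTower T t) p hp L (ι (t + 1) ≫ v)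
      (hL.trans (RepHom.hom_ext fun n x => congrArg (v.f n) (seqColimitι_toKillStep x).symm))
  choose next hnext hnextp using step
  let L : ∀ t, {L : (killTower T t).left ⟶ E // L ≫ p = ι t ≫ v} :=
    fun t => Nat.rec ⟨L₀, hL₀⟩ (fun t L => ⟨next t L.1 L.2, hnextp t L.1 L.2⟩) t
  let c : killDiagram T ⟶ (Functor.const ℕ).obj E :=
    NatTrans.ofSequence (fun t => (L t).1) fun t => by
      rw [killDiagram_map_succ, Functor.const_obj_map]
      exact (hnext t _ _).trans (Category.comp_id _).symm
  exact ⟨seqColimitDesc c,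
    (Category.assoc _ _ _).trans ((congrArg (i ≫ ·) (seqColimitι_desc c 0)).trans hiL₀),
    seqColimit_hom_ext fun t => (Category.assoc _ _ _).symm.trans
      ((congrArg (· ≫ p) (seqColimitι_desc c t)).trans (L t).2)⟩

/-- The small object argument, started from the disk factorization. -/
lemma exists_hasLLP_trivFib_isTrivFib {X : RepObj K A} (f : X ⟶ Y) :
    ∃ (Z : RepObj K A) (i : X ⟶ Z) (q : Z ⟶ Y),
      HasLLP (fun _ _ p => RepHom.IsTrivFib p) i ∧ RepHom.IsTrivFib q ∧ i ≫ q = f := by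
  obtain ⟨Z₀, i₀, q₀, hi₀, -, hq₀, rfl⟩ := exists_hasLLP_surj_isQis_isSurj f
  exact ⟨_, _, killColimitHom (Over.mk q₀), hasLLP_comp_seqColimitι hi₀,
    ⟨isSurj_killColimitHom hq₀, isQis_killColimitHom⟩,
    (Category.assoc _ _ _).trans (congrArg (i₀ ≫ ·) (seqColimitι_desc _ 0))⟩

end Factorization

end RepObj

noncomputable def repModelStructure : ModelStructure (RepObj K A) where
  W _ _ φ := RepHom.IsQis φ
  Fib _ _ φ := RepHom.IsSurj φ
  Cof _ _ i := HasLLP (fun _ _ p => RepHom.IsTrivFib p) i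
  w_comp _ _ := RepHom.IsQis.comp
  w_cancel_left _ _ := RepHom.IsQis.of_comp_left
  w_cancel_right _ _ := RepHom.IsQis.of_comp_right
  w_retract _ _ := RepHom.IsQis.of_isRetract
  fib_retract _ _ := RepHom.IsSurj.of_isRetract
  cof_retract _ _ := HasLLP.of_isRetract
  lift i p hi hp := by
    rintro (hWi | hWp)
    · obtain ⟨_, j, q, hj, hjW, hq, hjq⟩ := RepObj.exists_hasLLP_surj_isQis_isSurj i
      exact hi.of_factor hj ⟨hq, (hjq ▸ hWi).of_comp_left hjW⟩ hjq p hp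
    · exact hi p ⟨hp, hWp⟩
  factor_cof_triv_fib f := by
    obtain ⟨Z, i, q, hi, ⟨hq, hWq⟩, hiq⟩ := RepObj.exists_hasLLP_trivFib_isTrivFib f
    exact ⟨Z, i, q, hi, hq, hWq, hiq⟩
  factor_triv_cof_fib f := by
    obtain ⟨Z, i, q, hi, hWi, hq, hiq⟩ := RepObj.exists_hasLLP_surj_isQis_isSurj f
    exact ⟨Z, i, q, fun _ _ p hp => hi p hp.1, hWi, hq, hiq⟩

theorem stmt16_general {K : Type} [Field K] (A : ℤ → Type)
    [∀ i, AddCommGroup (A i)] [∀ i, Module K (A i)] [DGLA K A] :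
    ∃ M : ModelStructure (RepObj K A),
      (∀ (X Y : RepObj K A) (φ : X ⟶ Y), M.W φ ↔ RepHom.IsQis φ) ∧
      (∀ (X Y : RepObj K A) (φ : X ⟶ Y), M.Fib φ ↔ RepHom.IsSurj φ) ∧
      (∀ (X : RepObj K A) (φ : X ⟶ zeroRep K A), M.Fib φ) :=
  ⟨repModelStructure, fun _ _ _ => Iff.rfl, fun _ _ _ => Iff.rfl,
    fun _ φ => RepHom.isSurj_to_zeroRep φ⟩

/-- The category of representations of a dgla `𝔤` over a field of
characteristic zero carries a model structure whose weak equivalences are the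
quasi-isomorphisms and whose fibrations are the degreewise surjections; in particular every
object is fibrant (the unique map to the zero object is a fibration). -/
theorem stmt16 {K : Type} [Field K] [CharZero K] (A : ℤ → Type)
    [∀ i, AddCommGroup (A i)] [∀ i, Module K (A i)] [DGLA K A] :
    ∃ M : ModelStructure (RepObj K A),
      (∀ (X Y : RepObj K A) (φ : X ⟶ Y), M.W φ ↔ RepHom.IsQis φ) ∧
      (∀ (X Y : RepObj K A) (φ : X ⟶ Y), M.Fib φ ↔ RepHom.IsSurj φ) ∧
      (∀ (X : RepObj K A) (φ : X ⟶ zeroRep K A), M.Fib φ) :=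
  stmt16_general A

end RepCategory
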